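/- arXiv:1008.3571 — 2 statements merged into one kernel-verified Lean document; each statement's English description precedes it below -/
import Mathlib

section
/- Let d ≥ 2 and let H be the subspace of e ∈ L²(S^{d-1}; ℂ^d) with ξ·e(ξ) = 0 a.e. If E(x) = ∫_{|ξ|=1} e^{i x·ξ} e(ξ) dσ(ξ) with e ∈ H, then |E(0)| ≤ (((d-1)/d)·|S^{d-1}|)^{1/2} · ‖e‖_{L²(S^{d-1})}. -/
open MeasureTheory Metric

/-- Surface measure on the unit sphere `S^{d-1} ⊂ ℝ^d`. -/
noncomputable def sphereMeasure (d : ℕ) :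
    Measure (sphere (0 : EuclideanSpace ℝ (Fin d)) 1) :=
  (volume : Measure (EuclideanSpace ℝ (Fin d))).toSphere

/-!
Write `v = E(0) = ∫ e dσ`. For a unit vector `ξ`, tangency gives
`⟪v, e(ξ)⟫ = ⟪P_ξ v, e(ξ)⟫`, where `P_ξ v = v - ⟪ξ, v⟫ ξ` is the component of `v` orthogonal
to `ξ`, so by Cauchy–Schwarz
`‖v‖² = Re ∫ ⟪v, e⟫ dσ ≤ ∫ ‖P_ξ v‖ ‖e(ξ)‖ dσ ≤ ‖P_• v‖_{L²} ‖e‖_{L²}`.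
By rotation invariance of `σ`, `∫ ⟪a, ξ⟫² dσ = ‖a‖² |S^{d-1}| / d` for real `a`; applied to the
real and imaginary parts of `v` this gives `∫ ‖P_ξ v‖² dσ = ‖v‖² |S^{d-1}| (d - 1) / d`.
-/

open scoped InnerProductSpace RealInnerProductSpace Pointwise

section

variable {𝕜 H : Type*} [RCLike 𝕜] [NormedAddCommGroup H] [InnerProductSpace 𝕜 H]

lemma norm_sub_inner_smul_sq {w : H} (hw : ‖w‖ = 1) (v : H) :
    ‖v - ⟪w, v⟫_𝕜 • w‖ ^ 2 = ‖v‖ ^ 2 - ‖⟪w, v⟫_𝕜‖ ^ 2 := by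
  rw [@norm_sub_sq 𝕜, inner_smul_right, ← inner_conj_symm, RCLike.conj_mul, norm_smul, hw,
    RCLike.norm_conj]
  norm_cast
  ring

lemma norm_inner_le_norm_sub_inner_smul_mul_norm {w y : H} (hwy : ⟪w, y⟫_𝕜 = 0) (v : H) :
    ‖⟪v, y⟫_𝕜‖ ≤ ‖v - ⟪w, v⟫_𝕜 • w‖ * ‖y‖ := by
  have : ⟪v - ⟪w, v⟫_𝕜 • w, y⟫_𝕜 = ⟪v, y⟫_𝕜 := by
    rw [inner_sub_left, inner_smul_left, hwy, mul_zero, sub_zero]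
  exact this ▸ norm_inner_le_norm _ _

end

section

variable {X : Type*} [MeasurableSpace X] {μ : Measure X}

lemma integral_mul_le_L2_mul_L2_of_nonneg {f g : X → ℝ}
    (hf0 : 0 ≤ᵐ[μ] f) (hg0 : 0 ≤ᵐ[μ] g) (hf : MemLp f 2 μ) (hg : MemLp g 2 μ) :
    ∫ x, f x * g x ∂μ ≤ √(∫ x, f x ^ 2 ∂μ) * √(∫ x, g x ^ 2 ∂μ) := by
  have := integral_mul_le_Lp_mul_Lq_of_nonneg Real.HolderConjugate.two_two hf0 hg0
    (by simpa using hf) (by simpa using hg)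
  simpa [Real.sqrt_eq_rpow] using this

lemma norm_sq_integral_le_of_re_inner_le {𝕜 H : Type*} [RCLike 𝕜] [NormedAddCommGroup H]
    [InnerProductSpace 𝕜 H] [NormedSpace ℝ H] [CompleteSpace H] [IsFiniteMeasure μ]
    {e : X → H} (he : MemLp e 2 μ) {g : X → ℝ} (hg : MemLp g 2 μ) (hg0 : 0 ≤ g)
    (h : ∀ᵐ x ∂μ, RCLike.re ⟪∫ y, e y ∂μ, e x⟫_𝕜 ≤ g x * ‖e x‖) :
    ‖∫ x, e x ∂μ‖ ^ 2 ≤ √(∫ x, g x ^ 2 ∂μ) * √(∫ x, ‖e x‖ ^ 2 ∂μ) := by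
  set v := ∫ x, e x ∂μ
  have he1 : Integrable e μ := he.integrable one_le_two
  calc ‖v‖ ^ 2 = ∫ x, RCLike.re ⟪v, e x⟫_𝕜 ∂μ := by
        rw [integral_re (he1.const_inner v), integral_inner he1,
          ← inner_self_eq_norm_sq (𝕜 := 𝕜)]
    _ ≤ ∫ x, g x * ‖e x‖ ∂μ :=
        integral_mono_ae (he1.const_inner v).re (hg.integrable_mul he.norm) h
    _ ≤ _ := integral_mul_le_L2_mul_L2_of_nonneg (.of_forall hg0)
        (.of_forall fun _ => norm_nonneg _) hg he.norm

end

namespace LinearIsometryEquiv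

variable {E : Type*} [NormedAddCommGroup E] [NormedSpace ℝ E]

def sphereHomeomorph (O : E ≃ₗᵢ[ℝ] E) : sphere (0 : E) 1 ≃ₜ sphere (0 : E) 1 :=
  O.toHomeomorph.subtype fun x => by simp

@[simp]
lemma coe_sphereHomeomorph_apply (O : E ≃ₗᵢ[ℝ] E) (ξ : sphere (0 : E) 1) :
    (O.sphereHomeomorph ξ : E) = O ξ := rfl

variable [MeasurableSpace E] [BorelSpace E]

lemma measurePreserving_sphereHomeomorph {μ : Measure E} {O : E ≃ₗᵢ[ℝ] E}
    (hO : MeasurePreserving O μ μ) :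
    MeasurePreserving O.sphereHomeomorph μ.toSphere μ.toSphere := by
  have hmeas := O.sphereHomeomorph.continuous.measurable
  refine ⟨hmeas, Measure.ext fun s hs => ?_⟩
  have hval : Subtype.val '' (O.sphereHomeomorph ⁻¹' s) = O.symm '' (Subtype.val '' s) := by
    rw [← O.sphereHomeomorph.image_symm, Set.image_image, Set.image_image]
    rfl
  have hsmul (A : Set E) :
      O.symm '' (Set.Ioo (0 : ℝ) 1 • A) = Set.Ioo (0 : ℝ) 1 • O.symm '' A := by
    simp only [← Set.image2_smul]
    exact Set.image_image2_distrib_right fun a b => O.symm.map_smul a b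
  rw [Measure.map_apply hmeas hs, Measure.toSphere_apply' _ (hmeas hs),
    Measure.toSphere_apply' _ hs, hval, ← hsmul, O.symm.image_eq_preimage_symm,
    symm_symm, hO.measure_preimage_emb O.toHomeomorph.measurableEmbedding]

end LinearIsometryEquiv

section SphereMoments

variable {E : Type*} [NormedAddCommGroup E] [InnerProductSpace ℝ E] [FiniteDimensional ℝ E]
  [MeasurableSpace E] [BorelSpace E]

lemma integral_inner_sq_toSphere_eq_of_norm_eq {u u' : E} (h : ‖u‖ = ‖u'‖) :
    ∫ ξ, ⟪u, (ξ : E)⟫ ^ 2 ∂(volume : Measure E).toSphere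
      = ∫ ξ, ⟪u', (ξ : E)⟫ ^ 2 ∂(volume : Measure E).toSphere := by
  set O := (ℝ ∙ (u - u'))ᗮ.reflection
  have hOu : O u = u' := Submodule.reflection_sub h
  conv_rhs => rw [← (O.measurePreserving_sphereHomeomorph O.measurePreserving).integral_comp
    O.sphereHomeomorph.measurableEmbedding]
  simp_rw [LinearIsometryEquiv.coe_sphereHomeomorph_apply, ← hOu, O.inner_map_map]

lemma finrank_mul_integral_inner_sq_toSphere (a : E) :
    Module.finrank ℝ E * ∫ ξ, ⟪a, (ξ : E)⟫ ^ 2 ∂(volume : Measure E).toSphere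
      = ‖a‖ ^ 2 * (volume : Measure E).toSphere.real Set.univ := by
  set σ := (volume : Measure E).toSphere
  let b := stdOrthonormalBasis ℝ E
  have hint (u : E) : Integrable (fun ξ : sphere (0 : E) 1 => ⟪u, (ξ : E)⟫ ^ 2) σ :=
    (by fun_prop : Continuous _).integrable_of_hasCompactSupport (.of_compactSpace _)
  calc Module.finrank ℝ E * ∫ ξ, ⟪a, (ξ : E)⟫ ^ 2 ∂σ
      = ∑ i, ∫ ξ, ⟪‖a‖ • b i, (ξ : E)⟫ ^ 2 ∂σ := by
        rw [Finset.sum_congr rfl fun i _ => integral_inner_sq_toSphere_eq_of_norm_eq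
          (u := ‖a‖ • b i) (u' := a) (by simp [norm_smul, b.orthonormal.1 i]),
          Finset.sum_const, Finset.card_univ, Fintype.card_fin, nsmul_eq_mul]
    _ = ‖a‖ ^ 2 * ∫ ξ, ∑ i, ⟪b i, (ξ : E)⟫ ^ 2 ∂σ := by
        rw [integral_finsetSum _ fun i _ => hint _, Finset.mul_sum]
        simp_rw [real_inner_smul_left, mul_pow, integral_const_mul]
    _ = ‖a‖ ^ 2 * σ.real Set.univ := by
        simp_rw [b.sum_sq_inner_right, norm_eq_of_mem_sphere, one_pow, integral_const,
          smul_eq_mul, mul_one]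

end SphereMoments

namespace EuclideanSpace

variable {ι : Type*}

def ofReal (x : EuclideanSpace ℝ ι) : EuclideanSpace ℂ ι := WithLp.toLp 2 fun j => (x j : ℂ)

@[simp] lemma ofReal_apply (x : EuclideanSpace ℝ ι) (j : ι) : ofReal x j = x j := rfl

@[fun_prop] lemma continuous_ofReal : Continuous (ofReal : EuclideanSpace ℝ ι → _) := by
  unfold ofReal; fun_prop

variable [Fintype ι]

@[simp] lemma norm_ofReal (x : EuclideanSpace ℝ ι) : ‖ofReal x‖ = ‖x‖ := by
  simp [EuclideanSpace.norm_eq]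

lemma inner_ofReal_left (x : EuclideanSpace ℝ ι) (y : EuclideanSpace ℂ ι) :
    ⟪ofReal x, y⟫_ℂ = ∑ j, (x j : ℂ) * y j := by
  simp [PiLp.inner_apply, mul_comm]

lemma norm_inner_ofReal_left_sq (x : EuclideanSpace ℝ ι) (v : EuclideanSpace ℂ ι) :
    ‖⟪ofReal x, v⟫_ℂ‖ ^ 2
      = ⟪WithLp.toLp 2 fun j => (v j).re, x⟫ ^ 2
        + ⟪WithLp.toLp 2 fun j => (v j).im, x⟫ ^ 2 := by
  rw [Complex.sq_norm, Complex.normSq_apply]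
  simp [PiLp.inner_apply, Complex.re_sum, Complex.im_sum, mul_comm]
  ring

lemma norm_sq_eq_norm_sq_re_add_norm_sq_im (v : EuclideanSpace ℂ ι) :
    ‖v‖ ^ 2 = ‖(WithLp.toLp 2 fun j => (v j).re : EuclideanSpace ℝ ι)‖ ^ 2
      + ‖(WithLp.toLp 2 fun j => (v j).im : EuclideanSpace ℝ ι)‖ ^ 2 := by
  rw [EuclideanSpace.norm_sq_eq, EuclideanSpace.real_norm_sq_eq, EuclideanSpace.real_norm_sq_eq,
    ← Finset.sum_add_distrib]
  refine Finset.sum_congr rfl fun j _ => ?_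
  rw [Complex.sq_norm, Complex.normSq_apply]
  simp [sq]

lemma card_mul_integral_norm_inner_ofReal_sq_toSphere (v : EuclideanSpace ℂ ι) :
    Fintype.card ι * ∫ ξ, ‖⟪ofReal (ξ : EuclideanSpace ℝ ι), v⟫_ℂ‖ ^ 2
        ∂(volume : Measure (EuclideanSpace ℝ ι)).toSphere
      = ‖v‖ ^ 2 * (volume : Measure (EuclideanSpace ℝ ι)).toSphere.real Set.univ := by
  simp_rw [norm_inner_ofReal_left_sq]
  rw [integral_add
      ((by fun_prop : Continuous _).integrable_of_hasCompactSupport (.of_compactSpace _))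
      ((by fun_prop : Continuous _).integrable_of_hasCompactSupport (.of_compactSpace _)), mul_add,
    ← finrank_euclideanSpace (𝕜 := ℝ), finrank_mul_integral_inner_sq_toSphere,
    finrank_mul_integral_inner_sq_toSphere, norm_sq_eq_norm_sq_re_add_norm_sq_im v, add_mul]

lemma card_mul_integral_norm_sub_inner_ofReal_smul_sq_toSphere (v : EuclideanSpace ℂ ι) :
    Fintype.card ι * ∫ ξ,
        ‖v - ⟪ofReal (ξ : EuclideanSpace ℝ ι), v⟫_ℂ • ofReal (ξ : EuclideanSpace ℝ ι)‖ ^ 2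
        ∂(volume : Measure (EuclideanSpace ℝ ι)).toSphere
      = (Fintype.card ι - 1)
        * (‖v‖ ^ 2 * (volume : Measure (EuclideanSpace ℝ ι)).toSphere.real Set.univ) := by
  have hw (ξ : sphere (0 : EuclideanSpace ℝ ι) 1) : ‖ofReal (ξ : EuclideanSpace ℝ ι)‖ = 1 := by
    simp
  simp_rw [norm_sub_inner_smul_sq (hw _)]
  rw [integral_sub (integrable_const _)
      ((by fun_prop : Continuous _).integrable_of_hasCompactSupport (.of_compactSpace _)),
    integral_const, mul_sub, card_mul_integral_norm_inner_ofReal_sq_toSphere, smul_eq_mul]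
  ring

end EuclideanSpace

open EuclideanSpace

instance (d : ℕ) : IsFiniteMeasure (sphereMeasure d) := by
  unfold sphereMeasure; infer_instance

/-- If `E(x) = ∫_{|ξ|=1} e^{ix·ξ} e(ξ) dσ` with `e ∈ L²(S^{d-1};ℂ^d)` tangential
(`ξ·e(ξ) = 0` a.e.), then `|E(0)| ≤ (((d-1)/d)|S^{d-1}|)^{1/2} ‖e‖_{L²}`. -/
theorem stmt_1 (d : ℕ) (hd : 2 ≤ d)
    (e : sphere (0 : EuclideanSpace ℝ (Fin d)) 1 → EuclideanSpace ℂ (Fin d))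
    (he : MemLp e 2 (sphereMeasure d))
    (htang : ∀ᵐ (ξ : sphere (0 : EuclideanSpace ℝ (Fin d)) 1) ∂(sphereMeasure d),
      ∑ j, ((ξ : EuclideanSpace ℝ (Fin d)) j : ℂ) * e ξ j = 0)
    (E : EuclideanSpace ℝ (Fin d) → EuclideanSpace ℂ (Fin d))
    (hE : ∀ x, E x = ∫ ξ, Complex.exp (Complex.I *
        ((inner ℝ x (ξ : EuclideanSpace ℝ (Fin d)) : ℝ) : ℂ)) • e ξ ∂(sphereMeasure d)) :
    ‖E 0‖ ≤ Real.sqrt (((d - 1 : ℝ) / d) * (sphereMeasure d Set.univ).toReal) *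
        Real.sqrt (∫ ξ, ‖e ξ‖ ^ 2 ∂(sphereMeasure d)) := by
  have hE0 : E 0 = ∫ ξ, e ξ ∂(sphereMeasure d) := by simp [hE]
  set g := fun ξ : sphere (0 : EuclideanSpace ℝ (Fin d)) 1 =>
    ‖E 0 - ⟪ofReal (ξ : EuclideanSpace ℝ (Fin d)), E 0⟫_ℂ
      • ofReal (ξ : EuclideanSpace ℝ (Fin d))‖ with hg_def
  have key := norm_sq_integral_le_of_re_inner_le he
    ((by fun_prop : Continuous g).memLp_of_hasCompactSupport (.of_compactSpace g))
    (fun _ => norm_nonneg _) (𝕜 := ℂ) <| by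
      filter_upwards [htang] with ξ hξ
      rw [← hE0]
      exact (RCLike.re_le_norm _).trans
        (norm_inner_le_norm_sub_inner_smul_mul_norm (by rwa [inner_ofReal_left]) _)
  have hg_int : ∫ ξ, g ξ ^ 2 ∂(sphereMeasure d)
      = ‖E 0‖ ^ 2 * ((d - 1) / d * (sphereMeasure d Set.univ).toReal) := by
    have h := card_mul_integral_norm_sub_inner_ofReal_smul_sq_toSphere (E 0)
    rw [Fintype.card_fin, Measure.real] at h
    have hd0 : (d : ℝ) ≠ 0 := Nat.cast_ne_zero.mpr (by omega)
    rw [hg_def, sphereMeasure]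
    field_simp
    linear_combination h
  rw [← hE0, hg_int, Real.sqrt_mul (sq_nonneg _), Real.sqrt_sq (norm_nonneg _), mul_assoc] at key
  rcases (norm_nonneg (E 0)).eq_or_lt' with h0 | hpos
  · rw [h0]
    exact mul_nonneg (Real.sqrt_nonneg _) (Real.sqrt_nonneg _)
  · exact le_of_mul_le_mul_left (by rwa [← sq]) hpos
end

section
/- Let e ∈ L²(S^{d-1}; ℂ^d) with ξ·e(ξ) = 0 a.e. and ‖e‖_{L²(S^{d-1})} = 1. Then the first component of the vector ∫_{|ξ|=1} e(ξ) dσ equals the L² inner product ∫_{|ξ|=1} e(ξ)·ℓ(ξ) dσ, where ℓ(ξ) = (1,0,…,0) − ξ₁ξ, and hence |∫_{|ξ|=1} e₁(ξ) dσ| ≤ (|S^{d-1}|·(d-1)/d)^{1/2}, with equality iff e is a unimodular scalar multiple of ℓ/‖ℓ‖. -/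
open MeasureTheory Metric

/-!
Since `ξ · e(ξ) = 0`, the first component `e₁(ξ)` equals `e(ξ) · ℓ(ξ)` pointwise, so
`∫ e₁ dσ = ⟪ℓ, e⟫_{L²}`, and Cauchy–Schwarz in `L²(S^{d-1}; ℂ^d)` together with its equality
case gives the rest. On the sphere `|ℓ(ξ)|² = 1 - ξ₁²`, and `∫ ξ₁² dσ = |S^{d-1}|/d` because the
`d` integrals `∫ ξᵢ² dσ` agree (coordinate swaps preserve `σ`) and sum to `|S^{d-1}|`; hence
`‖ℓ‖²_{L²} = |S^{d-1}| (d-1)/d`.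
-/

open Set Pointwise

section InnerProduct

variable {𝕜 E : Type*} [RCLike 𝕜] [NormedAddCommGroup E] [InnerProductSpace 𝕜 E]

theorem norm_inner_eq_norm_iff_of_norm_eq_one {u v : E} (hu : u ≠ 0) (hv : ‖v‖ = 1) :
    ‖inner 𝕜 u v‖ = ‖u‖ ↔ ∃ z : 𝕜, ‖z‖ = 1 ∧ v = (z / (‖u‖ : 𝕜)) • u := by
  have hu' : (‖u‖ : 𝕜) ≠ 0 := RCLike.ofReal_ne_zero.mpr (norm_ne_zero_iff.mpr hu)
  have hv0 : v ≠ 0 := by rintro rfl; simp at hv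
  constructor
  · intro h
    obtain ⟨r, -, rfl⟩ := (norm_inner_eq_norm_iff hu hv0).mp (by rw [h, hv, mul_one])
    refine ⟨r * ‖u‖, ?_, by rw [mul_div_cancel_right₀ _ hu']⟩
    rw [norm_smul] at hv
    simpa [norm_mul] using hv
  · rintro ⟨z, hz, rfl⟩
    rw [inner_smul_right, inner_self_eq_norm_sq_to_K, norm_mul, norm_div, hz, norm_pow]
    simp only [RCLike.norm_ofReal, abs_norm]
    field_simp

end InnerProduct

namespace MeasureTheory

variable {α 𝕜 E : Type*} [MeasurableSpace α] {μ : Measure α} [RCLike 𝕜]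
  [NormedAddCommGroup E] [InnerProductSpace 𝕜 E] {f g : α → E}

theorem MemLp.inner_toLp_toLp (hf : MemLp f 2 μ) (hg : MemLp g 2 μ) :
    inner 𝕜 (hf.toLp f) (hg.toLp g) = ∫ a, inner 𝕜 (f a) (g a) ∂μ := by
  rw [L2.inner_def]
  refine integral_congr_ae ?_
  filter_upwards [hf.coeFn_toLp, hg.coeFn_toLp] with a hfa hga
  rw [hfa, hga]

include 𝕜 in
theorem MemLp.norm_toLp_eq_sqrt (hf : MemLp f 2 μ) :
    ‖hf.toLp f‖ = √(∫ a, ‖f a‖ ^ 2 ∂μ) := by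
  have hint : Integrable (fun a => inner 𝕜 (f a) (f a)) μ :=
    (L2.integrable_inner (hf.toLp f) (hf.toLp f)).congr <| by
      filter_upwards [hf.coeFn_toLp] with a ha; rw [ha]
  rw [← Real.sqrt_sq (norm_nonneg _), @norm_sq_eq_re_inner 𝕜, hf.inner_toLp_toLp hf,
    ← integral_re hint]
  simp only [inner_self_eq_norm_sq]

theorem norm_integral_inner_le_sqrt (hf : MemLp f 2 μ) (hg : MemLp g 2 μ)
    (hg1 : ∫ a, ‖g a‖ ^ 2 ∂μ = 1) :
    ‖∫ a, inner 𝕜 (f a) (g a) ∂μ‖ ≤ √(∫ a, ‖f a‖ ^ 2 ∂μ) := by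
  have hG : ‖hg.toLp g‖ = 1 := by rw [hg.norm_toLp_eq_sqrt (𝕜 := 𝕜), hg1, Real.sqrt_one]
  rw [← hf.inner_toLp_toLp hg, ← hf.norm_toLp_eq_sqrt (𝕜 := 𝕜), ← mul_one ‖hf.toLp f‖, ← hG]
  exact norm_inner_le_norm _ _

theorem norm_integral_inner_eq_sqrt_iff (hf : MemLp f 2 μ) (hg : MemLp g 2 μ)
    (hg1 : ∫ a, ‖g a‖ ^ 2 ∂μ = 1) (hf0 : 0 < ∫ a, ‖f a‖ ^ 2 ∂μ) :
    ‖∫ a, inner 𝕜 (f a) (g a) ∂μ‖ = √(∫ a, ‖f a‖ ^ 2 ∂μ) ↔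
      ∃ z : 𝕜, ‖z‖ = 1 ∧ g =ᵐ[μ] fun a => (z / (√(∫ a, ‖f a‖ ^ 2 ∂μ) : 𝕜)) • f a := by
  have hF : hf.toLp f ≠ 0 := by
    rw [← norm_ne_zero_iff, hf.norm_toLp_eq_sqrt (𝕜 := 𝕜)]; positivity
  have hG : ‖hg.toLp g‖ = 1 := by rw [hg.norm_toLp_eq_sqrt (𝕜 := 𝕜), hg1, Real.sqrt_one]
  rw [← hf.inner_toLp_toLp hg, ← hf.norm_toLp_eq_sqrt (𝕜 := 𝕜),
    norm_inner_eq_norm_iff_of_norm_eq_one hF hG]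
  refine exists_congr fun z => and_congr_right fun _ => ?_
  rw [← MemLp.toLp_const_smul, MemLp.toLp_eq_toLp_iff]
  rfl

end MeasureTheory

section UnitSphere

variable {E : Type*} [NormedAddCommGroup E] [NormedSpace ℝ E]

theorem LinearIsometryEquiv.mapsTo_unitSphere (f : E ≃ₗᵢ[ℝ] E) :
    MapsTo f (sphere (0 : E) 1) (sphere (0 : E) 1) := fun x hx => by simpa using hx

theorem LinearIsometryEquiv.preimage_set_smul (f : E ≃ₗᵢ[ℝ] E) (T : Set ℝ) (A : Set E) :
    f ⁻¹' (T • A) = T • f ⁻¹' A := by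
  ext x
  simp only [mem_smul, mem_preimage]
  constructor
  · rintro ⟨r, hr, a, ha, hx⟩
    refine ⟨r, hr, f.symm a, by simpa using ha, ?_⟩
    rw [← f.symm_apply_apply x, ← hx, f.symm.map_smul]
  · rintro ⟨r, hr, a, ha, rfl⟩
    exact ⟨r, hr, f a, ha, (f.map_smul r a).symm⟩

/-- `μ.toSphere s = dim E * μ (Ioo 0 1 • s)`, and a linear isometry commutes with the
radial scaling `Ioo 0 1 • ·`. -/
theorem MeasureTheory.MeasurePreserving.toSphere_restrict [MeasurableSpace E] [BorelSpace E]
    {μ : Measure E} {f : E ≃ₗᵢ[ℝ] E} (hf : MeasurePreserving f μ μ) :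
    MeasurePreserving (f.mapsTo_unitSphere.restrict f _ _) μ.toSphere μ.toSphere := by
  set F := f.mapsTo_unitSphere.restrict f _ _
  have hF : Continuous F := f.continuous.restrict f.mapsTo_unitSphere
  refine ⟨hF.measurable, Measure.ext fun s hs => ?_⟩
  have himage : ((↑) : sphere (0 : E) 1 → E) '' (F ⁻¹' s) = f ⁻¹' ((↑) '' s) := by
    ext x
    constructor
    · rintro ⟨ξ, hξ, rfl⟩
      exact ⟨_, hξ, rfl⟩
    · rintro ⟨η, hη, hx⟩
      have hxs : x ∈ sphere (0 : E) 1 := by simpa [hx] using η.2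
      have hFx : F ⟨x, hxs⟩ = η := Subtype.ext hx.symm
      exact ⟨⟨x, hxs⟩, by rwa [mem_preimage, hFx], rfl⟩
  rw [Measure.map_apply hF.measurable hs, Measure.toSphere_apply' _ (hF.measurable hs),
    Measure.toSphere_apply' _ hs, himage, ← f.preimage_set_smul,
    hf.measure_preimage_emb f.toHomeomorph.measurableEmbedding]

end UnitSphere

section EuclideanSpace

variable {ι : Type*} [Fintype ι]

theorem norm_toLp_ofReal (x : EuclideanSpace ℝ ι) :
    ‖(WithLp.toLp 2 fun j => (x j : ℂ) : EuclideanSpace ℂ ι)‖ = ‖x‖ := by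
  simp [EuclideanSpace.norm_eq]

theorem inner_toLp_ofReal (x : EuclideanSpace ℝ ι) (w : EuclideanSpace ℂ ι) :
    inner ℂ (WithLp.toLp 2 fun j => (x j : ℂ) : EuclideanSpace ℂ ι) w = ∑ j, w j * x j := by
  simp [PiLp.inner_apply]

variable [DecidableEq ι]

theorem sum_mul_single_sub_smul_of_sum_mul_eq_zero (ξ : EuclideanSpace ℝ ι) (w : ι → ℂ) (i : ι)
    (h : ∑ j, (ξ j : ℂ) * w j = 0) :
    ∑ j, w j * ((EuclideanSpace.single i 1 - ξ i • ξ : EuclideanSpace ℝ ι) j : ℂ) = w i := by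
  simp only [PiLp.sub_apply, PiLp.smul_apply, PiLp.single_apply, smul_eq_mul,
    Complex.ofReal_sub, Complex.ofReal_mul, mul_sub, Finset.sum_sub_distrib]
  calc _ = w i - (ξ i : ℂ) * ∑ j, (ξ j : ℂ) * w j := by
        rw [Finset.mul_sum]
        congr 1
        · simp [apply_ite Complex.ofReal]
        · exact Finset.sum_congr rfl fun j _ => by ring
    _ = w i := by rw [h, mul_zero, sub_zero]

theorem norm_single_sub_smul_sq {ξ : EuclideanSpace ℝ ι} (hξ : ‖ξ‖ = 1) (i : ι) :
    ‖EuclideanSpace.single i 1 - ξ i • ξ‖ ^ 2 = 1 - ξ i ^ 2 := by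
  rw [norm_sub_sq_real, real_inner_smul_right, EuclideanSpace.inner_single_left, norm_smul, hξ]
  simp
  ring

end EuclideanSpace

section SphereMeasure

variable {d : ℕ}

instance : IsFiniteMeasure (sphereMeasure d) := by
  unfold sphereMeasure; infer_instance

theorem sphereMeasure_real_univ_pos (hd : 0 < d) : 0 < (sphereMeasure d).real univ := by
  have : Nonempty (Fin d) := ⟨⟨0, hd⟩⟩
  have : NeZero (sphereMeasure d) := ⟨Measure.toSphere_ne_zero _⟩
  exact measureReal_univ_pos

theorem sum_sq_coord_of_mem_sphere (ξ : sphere (0 : EuclideanSpace ℝ (Fin d)) 1) :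
    ∑ i, (ξ : EuclideanSpace ℝ (Fin d)) i ^ 2 = 1 := by
  rw [← EuclideanSpace.real_norm_sq_eq, norm_eq_of_mem_sphere, one_pow]

theorem integrable_sphere_coord_sq (i : Fin d) :
    Integrable (fun ξ : sphere (0 : EuclideanSpace ℝ (Fin d)) 1 =>
      (ξ : EuclideanSpace ℝ (Fin d)) i ^ 2) (sphereMeasure d) :=
  Continuous.integrable_of_hasCompactSupport (by fun_prop) (.of_compactSpace _)

theorem integral_sphere_coord_sq_eq (i j : Fin d) :
    ∫ ξ, (ξ : EuclideanSpace ℝ (Fin d)) i ^ 2 ∂(sphereMeasure d) =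
      ∫ ξ, (ξ : EuclideanSpace ℝ (Fin d)) j ^ 2 ∂(sphereMeasure d) := by
  set f := LinearIsometryEquiv.piLpCongrLeft 2 ℝ ℝ (Equiv.swap i j)
  have hf : MeasurePreserving (f.mapsTo_unitSphere.restrict f _ _) (sphereMeasure d)
      (sphereMeasure d) := f.measurePreserving.toSphere_restrict
  calc ∫ ξ, (ξ : EuclideanSpace ℝ (Fin d)) i ^ 2 ∂(sphereMeasure d)
      = ∫ ξ, (f.mapsTo_unitSphere.restrict f _ _ ξ : EuclideanSpace ℝ (Fin d)) j ^ 2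
          ∂(sphereMeasure d) := by
        congr with ξ
        simp [f, LinearIsometryEquiv.piLpCongrLeft_apply]
    _ = ∫ ξ, (ξ : EuclideanSpace ℝ (Fin d)) j ^ 2 ∂(sphereMeasure d) := by
        have h := integral_map hf.measurable.aemeasurable
          (hf.map_eq ▸ (integrable_sphere_coord_sq j).aestronglyMeasurable)
        rw [hf.map_eq] at h
        exact h.symm

theorem integral_sphere_coord_sq (hd : 0 < d) (i : Fin d) :
    ∫ ξ, (ξ : EuclideanSpace ℝ (Fin d)) i ^ 2 ∂(sphereMeasure d) =
      (sphereMeasure d).real univ / d := by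
  have hsum : ∑ j, ∫ ξ, (ξ : EuclideanSpace ℝ (Fin d)) j ^ 2 ∂(sphereMeasure d) =
      (sphereMeasure d).real univ := by
    rw [← integral_finsetSum _ fun j _ => integrable_sphere_coord_sq j]
    simp [sum_sq_coord_of_mem_sphere]
  simp_rw [integral_sphere_coord_sq_eq _ i, Finset.sum_const, Finset.card_univ,
    Fintype.card_fin, nsmul_eq_mul] at hsum
  rw [← hsum]
  field_simp

theorem integral_norm_single_sub_smul_sq (hd : 0 < d) (i : Fin d) :
    ∫ ξ : sphere (0 : EuclideanSpace ℝ (Fin d)) 1,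
      ‖EuclideanSpace.single i 1 - (ξ : EuclideanSpace ℝ (Fin d)) i • (ξ : EuclideanSpace ℝ (Fin d))‖
        ^ 2 ∂(sphereMeasure d) = (sphereMeasure d).real univ * ((d - 1 : ℝ) / d) := by
  simp_rw [fun ξ : sphere (0 : EuclideanSpace ℝ (Fin d)) 1 =>
    norm_single_sub_smul_sq (norm_eq_of_mem_sphere ξ) i]
  rw [integral_sub (integrable_const 1) (integrable_sphere_coord_sq i),
    integral_sphere_coord_sq hd, integral_const, smul_eq_mul, mul_one]
  field_simp

end SphereMeasure

/-- For tangential `e ∈ L²(S^{d-1};ℂ^d)` of unit `L²` norm, the first component of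
`∫ e dσ` equals `∫ e·ℓ dσ` where `ℓ(ξ) = (1,0,…,0) − ξ₁ξ`; hence
`|∫ e₁ dσ| ≤ (|S^{d-1}|(d-1)/d)^{1/2}`, with equality iff `e` is a unimodular scalar
multiple of `ℓ/‖ℓ‖`. -/
theorem stmt_19 (d : ℕ) (hd : 2 ≤ d)
    (ℓ : EuclideanSpace ℝ (Fin d) → EuclideanSpace ℝ (Fin d))
    (hℓ : ∀ ξ, ℓ ξ = EuclideanSpace.single (⟨0, by omega⟩ : Fin d) (1 : ℝ)
        - ξ (⟨0, by omega⟩ : Fin d) • ξ)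
    (e : sphere (0 : EuclideanSpace ℝ (Fin d)) 1 → EuclideanSpace ℂ (Fin d))
    (he : MemLp e 2 (sphereMeasure d))
    (htang : ∀ᵐ (ξ : sphere (0 : EuclideanSpace ℝ (Fin d)) 1) ∂(sphereMeasure d),
      ∑ j, ((ξ : EuclideanSpace ℝ (Fin d)) j : ℂ) * e ξ j = 0)
    (hnorm : ∫ ξ, ‖e ξ‖ ^ 2 ∂(sphereMeasure d) = 1) :
    (∫ ξ, e ξ ∂(sphereMeasure d)) (⟨0, by omega⟩ : Fin d) =
      ∫ ξ, ∑ j, e ξ j * ((ℓ (ξ : EuclideanSpace ℝ (Fin d)) j : ℝ) : ℂ)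
        ∂(sphereMeasure d) ∧
    ‖(∫ ξ, e ξ ∂(sphereMeasure d)) (⟨0, by omega⟩ : Fin d)‖ ≤
      Real.sqrt ((sphereMeasure d Set.univ).toReal * ((d - 1 : ℝ) / d)) ∧
    (‖(∫ ξ, e ξ ∂(sphereMeasure d)) (⟨0, by omega⟩ : Fin d)‖ =
        Real.sqrt ((sphereMeasure d Set.univ).toReal * ((d - 1 : ℝ) / d)) ↔
      ∃ z : ℂ, ‖z‖ = 1 ∧ e =ᵐ[sphereMeasure d] fun ξ => WithLp.toLp 2 fun j =>
        z / (Real.sqrt ((sphereMeasure d Set.univ).toReal * ((d - 1 : ℝ) / d)) : ℂ) *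
          ((ℓ (ξ : EuclideanSpace ℝ (Fin d)) j : ℝ) : ℂ)) := by
  set L : sphere (0 : EuclideanSpace ℝ (Fin d)) 1 → EuclideanSpace ℂ (Fin d) := fun ξ =>
    WithLp.toLp 2 fun j => ((ℓ (ξ : EuclideanSpace ℝ (Fin d)) j : ℝ) : ℂ) with hL
  have hLp : MemLp L 2 (sphereMeasure d) := by
    refine Continuous.memLp_of_hasCompactSupport ?_ (.of_compactSpace _)
    simp only [hL, hℓ]
    fun_prop
  have hL_sq : ∫ ξ, ‖L ξ‖ ^ 2 ∂(sphereMeasure d) =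
      (sphereMeasure d Set.univ).toReal * ((d - 1 : ℝ) / d) := by
    simp only [hL, norm_toLp_ofReal, hℓ]
    exact integral_norm_single_sub_smul_sq (by omega) _
  have hL_pos : 0 < ∫ ξ, ‖L ξ‖ ^ 2 ∂(sphereMeasure d) := by
    have : (2 : ℝ) ≤ d := by exact_mod_cast hd
    rw [hL_sq]
    exact mul_pos (sphereMeasure_real_univ_pos (by omega)) (div_pos (by linarith) (by linarith))
  have hfirst : (∫ ξ, e ξ ∂(sphereMeasure d)) (⟨0, by omega⟩ : Fin d) =
      ∫ ξ, ∑ j, e ξ j * ((ℓ (ξ : EuclideanSpace ℝ (Fin d)) j : ℝ) : ℂ) ∂(sphereMeasure d) := by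
    refine ((EuclideanSpace.proj _).integral_comp_comm (he.integrable one_le_two)).symm.trans ?_
    refine integral_congr_ae (htang.mono fun ξ hξ => ?_)
    simp only [hℓ]
    exact (sum_mul_single_sub_smul_of_sum_mul_eq_zero _ _ _ hξ).symm
  have hinner : ∫ ξ, ∑ j, e ξ j * ((ℓ (ξ : EuclideanSpace ℝ (Fin d)) j : ℝ) : ℂ)
      ∂(sphereMeasure d) = ∫ ξ, inner ℂ (L ξ) (e ξ) ∂(sphereMeasure d) := by
    simp only [hL, inner_toLp_ofReal]
  refine ⟨hfirst, ?_, ?_⟩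
  · rw [hfirst, hinner, ← hL_sq]
    exact norm_integral_inner_le_sqrt hLp he hnorm
  · rw [hfirst, hinner, ← hL_sq]
    exact norm_integral_inner_eq_sqrt_iff hLp he hnorm hL_pos
end
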